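/- arXiv:2310.14124 — 3 statements merged into one kernel-verified Lean document; each statement's English description precedes it below -/
import Mathlib

section
/- Given an instance (A, B, C, D) of 3-dimensional matching with |A| = |B| = |C| = n, there exists a 3-dimensional matching D' ⊆ D with |D'| ≥ n if and only if there exists a supertag assignment to the 3n concept instances (the elements of A, B, and C) satisfying the Companionship Principle with total weight at least 3n, where the supertag set and weights are defined as follows: for each triple (a, b, c) ∈ D there is a supertag ⟦(b, −), (c, −)⟧ whose weight is 1 when assigned to a and 0 otherwise; for each b ∈ B there is a supertag ⟦(b, +)⟧ with weight 1 when assigned to b and 0 otherwise; for each c ∈ C there is a supertag ⟦(c, +)⟧ with weight 1 when assigned to c and 0 otherwise. -/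
open Classical

/-- The set of supertags of the reduction: labels are `B ⊕ C`, direction `false` = `−`
(substitution site) and `true` = `+` (root). -/
def supertagSet {A B C : Type} (D : Finset (A × B × C)) :
    Set (Multiset ((B ⊕ C) × Bool)) :=
  {s | (∃ t ∈ D, s = {(Sum.inl t.2.1, false), (Sum.inr t.2.2, false)}) ∨
       (∃ b : B, s = {(Sum.inl b, true)}) ∨
       (∃ c : C, s = {(Sum.inr c, true)})}

/-- The weight of assigning supertag `s` to position `p`: weight `1` exactly when
`a ∈ A` receives `⟦(b,−),(c,−)⟧` for some `(a,b,c) ∈ D`, or `b ∈ B` receives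
`⟦(b,+)⟧`, or `c ∈ C` receives `⟦(c,+)⟧`; weight `0` otherwise. -/
noncomputable def stWeight {A B C : Type} (D : Finset (A × B × C))
    (p : A ⊕ B ⊕ C) (s : Multiset ((B ⊕ C) × Bool)) : ℕ :=
  match p with
  | Sum.inl a =>
      if ∃ b c, (a, b, c) ∈ D ∧ s = {(Sum.inl b, false), (Sum.inr c, false)}
      then 1 else 0
  | Sum.inr (Sum.inl b) => if s = {(Sum.inl b, true)} then 1 else 0
  | Sum.inr (Sum.inr c) => if s = {(Sum.inr c, true)} then 1 else 0

/-- there is a 3-dimensional matching `D' ⊆ D` with `|D'| ≥ n` iff there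
is a supertag assignment to the `3n` concept instances satisfying the Companionship
Principle with total weight at least `3n`. -/
theorem matching_iff_supertagging {A B C : Type}
    [Fintype A] [Fintype B] [Fintype C]
    [DecidableEq A] [DecidableEq B] [DecidableEq C]
    (n : ℕ) (hA : Fintype.card A = n) (hB : Fintype.card B = n)
    (hC : Fintype.card C = n) (D : Finset (A × B × C)) :
    (∃ D' ⊆ D, n ≤ D'.card ∧
        ∀ t ∈ D', ∀ t' ∈ D', t ≠ t' →
          t.1 ≠ t'.1 ∧ t.2.1 ≠ t'.2.1 ∧ t.2.2 ≠ t'.2.2) ↔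
    (∃ σ : A ⊕ B ⊕ C → Multiset ((B ⊕ C) × Bool),
        (∀ p, σ p ∈ supertagSet D) ∧
        (∀ l : B ⊕ C,
          (∑ p : A ⊕ B ⊕ C, (σ p).count (l, false)) =
            ∑ p : A ⊕ B ⊕ C, (σ p).count (l, true)) ∧
        3 * n ≤ ∑ p : A ⊕ B ⊕ C, stWeight D p (σ p)) := by
  constructor
  · rintro ⟨D', hsub, hcard, hmatch⟩
    have hinj1 : ∀ t ∈ D', ∀ t' ∈ D', t.1 = t'.1 → t = t' := by
      intro t ht t' ht' h
      by_contra hne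
      exact (hmatch t ht t' ht' hne).1 h
    have hinj2 : ∀ t ∈ D', ∀ t' ∈ D', t.2.1 = t'.2.1 → t = t' := by
      intro t ht t' ht' h
      by_contra hne
      exact (hmatch t ht t' ht' hne).2.1 h
    have hinj3 : ∀ t ∈ D', ∀ t' ∈ D', t.2.2 = t'.2.2 → t = t' := by
      intro t ht t' ht' h
      by_contra hne
      exact (hmatch t ht t' ht' hne).2.2 h
    have hcard' : D'.card = n := by
      have h1 : (D'.image Prod.fst).card = D'.card :=
        Finset.card_image_of_injOn (fun t ht t' ht' h => hinj1 t ht t' ht' h)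
      have h2 : (D'.image Prod.fst).card ≤ Fintype.card A := Finset.card_le_univ _
      omega
    have key : ∀ {X : Type} [Fintype X] [DecidableEq X] (π : A × B × C → X),
        Fintype.card X = n → (∀ t ∈ D', ∀ t' ∈ D', π t = π t' → t = t') →
        ∀ x, ∃ t, t ∈ D' ∧ π t = x := by
      intro X _ _ π hX hinj x
      have h1 : (D'.image π).card = n := by
        rw [Finset.card_image_of_injOn (fun t ht t' ht' h => hinj t ht t' ht' h), hcard']
      have h2 : D'.image π = Finset.univ :=
        Finset.eq_univ_of_card _ (by rw [h1, hX])
      have h3 : x ∈ D'.image π := h2 ▸ Finset.mem_univ x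
      obtain ⟨t, ht, hte⟩ := Finset.mem_image.mp h3
      exact ⟨t, ht, hte⟩
    choose ta hta htae using key Prod.fst hA hinj1
    have hsurjB := key (fun t => t.2.1) hB hinj2
    have hsurjC := key (fun t => t.2.2) hC hinj3
    refine ⟨fun p => match p with
      | Sum.inl a => {(Sum.inl (ta a).2.1, false), (Sum.inr (ta a).2.2, false)}
      | Sum.inr (Sum.inl b) => {(Sum.inl b, true)}
      | Sum.inr (Sum.inr c) => {(Sum.inr c, true)}, ?_, ?_, ?_⟩
    · rintro (a | b | c)
      · exact Or.inl ⟨ta a, hsub (hta a), rfl⟩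
      · exact Or.inr (Or.inl ⟨b, rfl⟩)
      · exact Or.inr (Or.inr ⟨c, rfl⟩)
    · have hfiltB : ∀ b : B, (Finset.univ.filter (fun a => b = (ta a).2.1)).card = 1 := by
        intro b
        obtain ⟨t, ht, hte⟩ := hsurjB b
        rw [Finset.card_eq_one]
        refine ⟨t.1, ?_⟩
        ext a
        simp only [Finset.mem_filter, Finset.mem_univ, true_and, Finset.mem_singleton]
        constructor
        · intro h
          have h2 : ta a = t := hinj2 _ (hta a) _ ht (by rw [← h]; exact hte.symm)
          rw [← htae a, h2]
        · rintro rfl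
          have h2 : ta t.1 = t := hinj1 _ (hta t.1) _ ht (htae t.1)
          rw [h2]; exact hte.symm
      have hfiltC : ∀ c : C, (Finset.univ.filter (fun a => c = (ta a).2.2)).card = 1 := by
        intro c
        obtain ⟨t, ht, hte⟩ := hsurjC c
        rw [Finset.card_eq_one]
        refine ⟨t.1, ?_⟩
        ext a
        simp only [Finset.mem_filter, Finset.mem_univ, true_and, Finset.mem_singleton]
        constructor
        · intro h
          have h2 : ta a = t := hinj3 _ (hta a) _ ht (by rw [← h]; exact hte.symm)
          rw [← htae a, h2]
        · rintro rfl
          have h2 : ta t.1 = t := hinj1 _ (hta t.1) _ ht (htae t.1)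
          rw [h2]; exact hte.symm
      rintro (b | c)
      · simp only [Fintype.sum_sum_type, Multiset.insert_eq_cons, Multiset.count_cons,
          Multiset.count_singleton, Prod.mk.injEq, Sum.inl.injEq, reduceCtorEq,
          Multiset.count_zero, and_false, false_and, and_true, if_false, if_true]
        simp only [add_zero, zero_add, Finset.sum_const_zero]
        rw [← Finset.card_filter, hfiltB b]
        simp [Finset.filter_eq, Finset.filter_eq']
      · simp only [Fintype.sum_sum_type, Multiset.insert_eq_cons, Multiset.count_cons,
          Multiset.count_singleton, Prod.mk.injEq, Sum.inr.injEq, reduceCtorEq,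
          Multiset.count_zero, and_false, false_and, and_true, if_false, if_true]
        simp only [add_zero, zero_add, Finset.sum_const_zero]
        rw [← Finset.card_filter, hfiltC c]
        simp [Finset.filter_eq, Finset.filter_eq']
    · have w1 : ∀ a : A, stWeight D (Sum.inl a)
          ({(Sum.inl (ta a).2.1, false), (Sum.inr (ta a).2.2, false)} :
            Multiset ((B ⊕ C) × Bool)) = 1 := by
        intro a
        have hmem : (a, (ta a).2.1, (ta a).2.2) ∈ D := by
          have h2 : (a, (ta a).2.1, (ta a).2.2) = ta a := Prod.ext_iff.mpr ⟨(htae a).symm, rfl⟩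
          rw [h2]; exact hsub (hta a)
        simp only [stWeight]
        rw [if_pos ⟨(ta a).2.1, (ta a).2.2, hmem, rfl⟩]
      have w2 : ∀ b : B, stWeight D (Sum.inr (Sum.inl b))
          ({(Sum.inl b, true)} : Multiset ((B ⊕ C) × Bool)) = 1 := fun b => by
        simp [stWeight]
      have w3 : ∀ c : C, stWeight D (Sum.inr (Sum.inr c))
          ({(Sum.inr c, true)} : Multiset ((B ⊕ C) × Bool)) = 1 := fun c => by
        simp [stWeight]
      simp only [Fintype.sum_sum_type]
      rw [Finset.sum_congr rfl (fun a _ => w1 a), Finset.sum_congr rfl (fun b _ => w2 b),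
        Finset.sum_congr rfl (fun c _ => w3 c)]
      simp [Finset.card_univ, hA, hB, hC]
      omega
  · rintro ⟨σ, hmem, hcp, hw⟩
    have hw1 : ∀ p, stWeight D p (σ p) ≤ 1 := by
      rintro (a | b | c) <;> simp only [stWeight] <;> split <;> simp
    have hcard3 : Fintype.card (A ⊕ B ⊕ C) = 3 * n := by
      simp [hA, hB, hC]; ring
    have hall : ∀ p, stWeight D p (σ p) = 1 := by
      by_contra h
      push_neg at h
      obtain ⟨p₀, hp₀⟩ := h
      have hlt : stWeight D p₀ (σ p₀) < 1 := lt_of_le_of_ne (hw1 p₀) hp₀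
      have : ∑ p : A ⊕ B ⊕ C, stWeight D p (σ p) < ∑ _p : A ⊕ B ⊕ C, 1 :=
        Finset.sum_lt_sum (fun p _ => hw1 p) ⟨p₀, Finset.mem_univ p₀, hlt⟩
      rw [Finset.sum_const, Finset.card_univ, hcard3, smul_eq_mul, mul_one] at this
      omega
    have hAex : ∀ a : A, ∃ b c, (a, b, c) ∈ D ∧
        σ (Sum.inl a) = {(Sum.inl b, false), (Sum.inr c, false)} := by
      intro a
      have := hall (Sum.inl a)
      simp only [stWeight] at this
      by_contra h
      rw [if_neg h] at this
      exact absurd this (by norm_num)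
    choose f g hfD hfσ using hAex
    have hBσ : ∀ b : B, σ (Sum.inr (Sum.inl b)) = {(Sum.inl b, true)} := by
      intro b
      have := hall (Sum.inr (Sum.inl b))
      simp only [stWeight] at this
      by_contra h
      rw [if_neg h] at this
      exact absurd this (by norm_num)
    have hCσ : ∀ c : C, σ (Sum.inr (Sum.inr c)) = {(Sum.inr c, true)} := by
      intro c
      have := hall (Sum.inr (Sum.inr c))
      simp only [stWeight] at this
      by_contra h
      rw [if_neg h] at this
      exact absurd this (by norm_num)
    have hfinj : Function.Injective f := by
      intro a a' h
      have hcp' := hcp (Sum.inl (f a))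
      simp only [Fintype.sum_sum_type] at hcp'
      simp only [hfσ, hBσ, hCσ, Multiset.insert_eq_cons, Multiset.count_cons,
        Multiset.count_singleton, Prod.mk.injEq, Sum.inl.injEq, reduceCtorEq,
        Multiset.count_zero, and_false, false_and, and_true, if_false, if_true] at hcp'
      have hone : (Finset.univ.filter (fun x => f a = f x)).card = 1 := by
        rw [Finset.card_filter]
        convert hcp' using 2 <;> simp [eq_comm]
      have ha : a ∈ Finset.univ.filter (fun x => f a = f x) := by simp
      have ha' : a' ∈ Finset.univ.filter (fun x => f a = f x) := by simp [h]
      obtain ⟨x, hx⟩ := Finset.card_eq_one.mp hone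
      rw [hx, Finset.mem_singleton] at ha ha'
      rw [ha, ha']
    have hginj : Function.Injective g := by
      intro a a' h
      have hcp' := hcp (Sum.inr (g a))
      simp only [Fintype.sum_sum_type] at hcp'
      simp only [hfσ, hBσ, hCσ, Multiset.insert_eq_cons, Multiset.count_cons,
        Multiset.count_singleton, Prod.mk.injEq, Sum.inr.injEq, reduceCtorEq,
        Multiset.count_zero, and_false, false_and, and_true, if_false, if_true] at hcp'
      have hone : (Finset.univ.filter (fun x => g a = g x)).card = 1 := by
        rw [Finset.card_filter]
        convert hcp' using 2 <;> simp [eq_comm]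
      have ha : a ∈ Finset.univ.filter (fun x => g a = g x) := by simp
      have ha' : a' ∈ Finset.univ.filter (fun x => g a = g x) := by simp [h]
      obtain ⟨x, hx⟩ := Finset.card_eq_one.mp hone
      rw [hx, Finset.mem_singleton] at ha ha'
      rw [ha, ha']
    refine ⟨Finset.univ.image (fun a => (a, f a, g a)), ?_, ?_, ?_⟩
    · intro t ht
      obtain ⟨a, _, rfl⟩ := Finset.mem_image.mp ht
      exact hfD a
    · have : (Finset.univ.image (fun a => (a, f a, g a))).card = Fintype.card A := by
        rw [Finset.card_image_of_injective _ (fun a a' h => congrArg Prod.fst h),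
          Finset.card_univ]
      rw [this, hA]
    · intro t ht t' ht' hne
      obtain ⟨a, _, rfl⟩ := Finset.mem_image.mp ht
      obtain ⟨a', _, rfl⟩ := Finset.mem_image.mp ht'
      have haa : a ≠ a' := fun h => hne (by rw [h])
      exact ⟨haa, fun h => haa (hfinj h), fun h => haa (hginj h)⟩
end

section
/- In the reduction from 3-dimensional matching to supertagging, any supertag assignment satisfying the Companionship Principle and achieving total weight 3n must assign to every element b ∈ B the supertag ⟦(b, +)⟧, to every element c ∈ C the supertag ⟦(c, +)⟧, and to every element a ∈ A a supertag ⟦(b, −), (c, −)⟧ arising from some triple (a, b, c) ∈ D; moreover the induced map sending each a ∈ A to its triple yields a set of n triples that forms a 3-dimensional matching. -/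
open Classical

/-- any supertag assignment of the reduction satisfying the
Companionship Principle with total weight `3n` must give every `b ∈ B` the supertag
`⟦(b,+)⟧`, every `c ∈ C` the supertag `⟦(c,+)⟧`, and every `a ∈ A` a supertag
`⟦(b,−),(c,−)⟧` with `(a,b,c) ∈ D`; moreover the induced map from `A` to triples
yields a set of `n` triples forming a 3-dimensional matching. -/
theorem weight_3n_forces_matching {A B C : Type}
    [Fintype A] [Fintype B] [Fintype C]
    [DecidableEq A] [DecidableEq B] [DecidableEq C]
    (n : ℕ) (hA : Fintype.card A = n) (hB : Fintype.card B = n)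
    (hC : Fintype.card C = n) (D : Finset (A × B × C))
    (σ : A ⊕ B ⊕ C → Multiset ((B ⊕ C) × Bool))
    (hdom : ∀ p, σ p ∈ supertagSet D)
    (hCP : ∀ l : B ⊕ C,
      (∑ p : A ⊕ B ⊕ C, (σ p).count (l, false)) =
        ∑ p : A ⊕ B ⊕ C, (σ p).count (l, true))
    (hw : (∑ p : A ⊕ B ⊕ C, stWeight D p (σ p)) = 3 * n) :
    (∀ b : B, σ (Sum.inr (Sum.inl b)) = {(Sum.inl b, true)}) ∧
    (∀ c : C, σ (Sum.inr (Sum.inr c)) = {(Sum.inr c, true)}) ∧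
    (∀ a : A, ∃ b c, (a, b, c) ∈ D ∧
      σ (Sum.inl a) = {(Sum.inl b, false), (Sum.inr c, false)}) ∧
    (∃ f : A → B × C,
      (∀ a : A, (a, (f a).1, (f a).2) ∈ D ∧
        σ (Sum.inl a) = {(Sum.inl (f a).1, false), (Sum.inr (f a).2, false)}) ∧
      (Finset.univ.image (fun a : A => (a, (f a).1, (f a).2))).card = n ∧
      (Finset.univ.image (fun a : A => (a, (f a).1, (f a).2))) ⊆ D ∧
      ∀ t ∈ Finset.univ.image (fun a : A => (a, (f a).1, (f a).2)),
        ∀ t' ∈ Finset.univ.image (fun a : A => (a, (f a).1, (f a).2)),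
          t ≠ t' → t.1 ≠ t'.1 ∧ t.2.1 ≠ t'.2.1 ∧ t.2.2 ≠ t'.2.2) := by

  classical
  have hle : ∀ p, stWeight D p (σ p) ≤ 1 := by
    intro p
    rcases p with a | b | c <;> simp only [stWeight] <;> split <;> simp
  have hcard : Fintype.card (A ⊕ B ⊕ C) = 3 * n := by
    simp [Fintype.card_sum, hA, hB, hC]; ring
  have hone : ∀ p, stWeight D p (σ p) = 1 := by
    by_contra h
    push_neg at h
    obtain ⟨p, hp⟩ := h
    have hp0 : stWeight D p (σ p) < 1 := lt_of_le_of_ne (hle p) hp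
    have hlt : (∑ q : A ⊕ B ⊕ C, stWeight D q (σ q)) < ∑ _q : A ⊕ B ⊕ C, 1 :=
      Finset.sum_lt_sum (fun i _ => hle i) ⟨p, Finset.mem_univ p, hp0⟩
    rw [Finset.sum_const, Finset.card_univ, hcard, smul_eq_mul, mul_one, hw] at hlt
    omega
  have hBtag : ∀ b : B, σ (Sum.inr (Sum.inl b)) = {(Sum.inl b, true)} := by
    intro b
    have h := hone (Sum.inr (Sum.inl b))
    simp only [stWeight] at h
    by_contra hc
    rw [if_neg hc] at h
    omega
  have hCtag : ∀ c : C, σ (Sum.inr (Sum.inr c)) = {(Sum.inr c, true)} := by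
    intro c
    have h := hone (Sum.inr (Sum.inr c))
    simp only [stWeight] at h
    by_contra hc
    rw [if_neg hc] at h
    omega
  have hAtag : ∀ a : A, ∃ b c, (a, b, c) ∈ D ∧
      σ (Sum.inl a) = {(Sum.inl b, false), (Sum.inr c, false)} := by
    intro a
    have h := hone (Sum.inl a)
    simp only [stWeight] at h
    by_contra hc
    rw [if_neg hc] at h
    omega
  choose fb fc hD hs using hAtag
  -- counting lemma for B labels
  have hbcount : ∀ b : B, (∑ a : A, (if fb a = b then 1 else 0)) = 1 := by
    intro b
    have h := hCP (Sum.inl b)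
    rw [Fintype.sum_sum_type, Fintype.sum_sum_type,
        Fintype.sum_sum_type, Fintype.sum_sum_type] at h
    simp only [hs, hBtag, hCtag, Multiset.insert_eq_cons, Multiset.count_cons,
      Multiset.count_singleton, Prod.mk.injEq, Sum.inl.injEq, Sum.inr.injEq] at h
    simp only [reduceCtorEq, false_and, and_true, and_false, if_false, if_true,
      Finset.sum_const_zero, add_zero, zero_add, Finset.sum_ite_eq, Finset.mem_univ] at h
    simpa [eq_comm] using h
  have hccount : ∀ c : C, (∑ a : A, (if fc a = c then 1 else 0)) = 1 := by
    intro c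
    have h := hCP (Sum.inr c)
    rw [Fintype.sum_sum_type, Fintype.sum_sum_type,
        Fintype.sum_sum_type, Fintype.sum_sum_type] at h
    simp only [hs, hBtag, hCtag, Multiset.insert_eq_cons, Multiset.count_cons,
      Multiset.count_singleton, Prod.mk.injEq, Sum.inl.injEq, Sum.inr.injEq] at h
    simp only [reduceCtorEq, false_and, and_true, and_false, if_false, if_true,
      Finset.sum_const_zero, add_zero, zero_add, Finset.sum_ite_eq, Finset.mem_univ] at h
    simpa [eq_comm] using h
  have hfb_inj : Function.Injective fb := by
    intro a a' hEq
    have h1 := hbcount (fb a')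
    rw [← Finset.card_filter] at h1
    have hcle : (Finset.univ.filter (fun a => fb a = fb a')).card ≤ 1 := le_of_eq h1
    exact Finset.card_le_one.mp hcle a (by simp [hEq]) a' (by simp)
  have hfc_inj : Function.Injective fc := by
    intro a a' hEq
    have h1 := hccount (fc a')
    rw [← Finset.card_filter] at h1
    have hcle : (Finset.univ.filter (fun a => fc a = fc a')).card ≤ 1 := le_of_eq h1
    exact Finset.card_le_one.mp hcle a (by simp [hEq]) a' (by simp)
  refine ⟨hBtag, hCtag, fun a => ⟨fb a, fc a, hD a, hs a⟩, fun a => (fb a, fc a), ?_, ?_, ?_, ?_⟩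
  · exact fun a => ⟨hD a, hs a⟩
  · rw [Finset.card_image_of_injective _ (fun a a' h => congrArg Prod.fst h),
      Finset.card_univ, hA]
  · intro t ht
    simp only [Finset.mem_image, Finset.mem_univ, true_and] at ht
    obtain ⟨a, rfl⟩ := ht
    exact hD a
  · intro t ht t' ht' hne
    simp only [Finset.mem_image, Finset.mem_univ, true_and] at ht ht'
    obtain ⟨a, rfl⟩ := ht
    obtain ⟨a', rfl⟩ := ht'
    have haa : a ≠ a' := fun h => hne (by rw [h])
    exact ⟨haa, fun h => haa (hfb_inj h), fun h => haa (hfc_inj h)⟩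
end

section
/- In the reduction instance, if an assignment satisfies the Companionship Principle and every position in B receives its weight-1 supertag ⟦(b,+)⟧ and every position in C receives ⟦(c,+)⟧, then the multiset of substitution sites assigned to positions in A must contain exactly one occurrence of (b, −) for each b ∈ B and exactly one occurrence of (c, −) for each c ∈ C. -/
/-- in the reduction instance, if an assignment satisfies the
Companionship Principle, every position `b ∈ B` receives `⟦(b,+)⟧`, every position
`c ∈ C` receives `⟦(c,+)⟧`, and every position `a ∈ A` receives some
`⟦(b,−),(c,−)⟧` with `(a,b,c) ∈ D`, then the multiset of substitution sites
assigned to positions in `A` contains exactly one occurrence of `(b,−)` for each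
`b ∈ B` and exactly one occurrence of `(c,−)` for each `c ∈ C`. -/
theorem CP_forces_site_counts {A B C : Type}
    [Fintype A] [Fintype B] [Fintype C]
    [DecidableEq A] [DecidableEq B] [DecidableEq C]
    (n : ℕ) (hA : Fintype.card A = n) (hB : Fintype.card B = n)
    (hC : Fintype.card C = n) (D : Finset (A × B × C))
    (σ : A ⊕ B ⊕ C → Multiset ((B ⊕ C) × Bool))
    (hAtags : ∀ a : A, ∃ b c, (a, b, c) ∈ D ∧
      σ (Sum.inl a) = {(Sum.inl b, false), (Sum.inr c, false)})
    (hBtags : ∀ b : B, σ (Sum.inr (Sum.inl b)) = {(Sum.inl b, true)})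
    (hCtags : ∀ c : C, σ (Sum.inr (Sum.inr c)) = {(Sum.inr c, true)})
    (hCP : ∀ l : B ⊕ C,
      (∑ p : A ⊕ B ⊕ C, (σ p).count (l, false)) =
        ∑ p : A ⊕ B ⊕ C, (σ p).count (l, true)) :
    (∀ b : B, (∑ a : A, (σ (Sum.inl a)).count (Sum.inl b, false)) = 1) ∧
    (∀ c : C, (∑ a : A, (σ (Sum.inl a)).count (Sum.inr c, false)) = 1) := by
  constructor
  · intro b
    have h := hCP (Sum.inl b)
    simp only [Fintype.sum_sum_type] at h
    have h0 : ∑ a : A, (σ (Sum.inl a)).count (Sum.inl b, true) = 0 :=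
      Finset.sum_eq_zero fun a _ => by
        obtain ⟨b', c', -, hs⟩ := hAtags a
        simp [hs, Multiset.insert_eq_cons, Multiset.count_cons, Multiset.count_singleton]
    simp [hBtags, hCtags, h0, Multiset.count_singleton, Finset.sum_ite_eq'] at h
    exact h
  · intro c
    have h := hCP (Sum.inr c)
    simp only [Fintype.sum_sum_type] at h
    have h0 : ∑ a : A, (σ (Sum.inl a)).count (Sum.inr c, true) = 0 :=
      Finset.sum_eq_zero fun a _ => by
        obtain ⟨b', c', -, hs⟩ := hAtags a
        simp [hs, Multiset.insert_eq_cons, Multiset.count_cons, Multiset.count_singleton]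
    simp [hBtags, hCtags, h0, Multiset.count_singleton, Finset.sum_ite_eq'] at h
    exact h
end
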